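/- arXiv:1511.05613 — 2 statements merged into one kernel-verified Lean document; each statement's English description precedes it below -/
import Mathlib

section
/- Let β ≥ 2 be a real number and let s, δ satisfy the hypotheses of the nonlinear power estimate: s > 3/2 and 2/(β−1) − 3/2 ≤ δ if β is an integer, and 5/2 < s < β − [β] + 5/2 and 2/([β]−1) − 3/2 ≤ δ otherwise. Then there is a constant C, independent of the functions involved, such that for all w₁, w₂ ∈ H_{s,δ}(ℝ³) with w₁ ≥ 0 and w₂ ≥ 0: ‖w₁^β − w₂^β‖_{L²_{δ+2}} ≤ C_d ‖w₁ − w₂‖_{L²_δ}, where the constant C_d satisfies C_d² ≤ C (β²/2)(‖w₁‖_{H_{s,δ}}^{2(β−1)} + ‖w₂‖_{H_{s,δ}}^{2(β−1)}). -/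
open MeasureTheory Real Set
open scoped FourierTransform ENNReal NNReal

noncomputable section

abbrev E3 : Type := EuclideanSpace ℝ (Fin 3)

/-- A dyadic partition of unity on ℝ³ as in the paper: `ψ j ∈ C_0^∞`, nonnegative,
`supp ψ₀ ⊆ {|x| ≤ 2}`, `ψ₀ = 1` on `{|x| ≤ 1}`, for `j ≥ 1`
`supp ψ_j ⊆ {2^(j-2) ≤ |x| ≤ 2^(j+1)}`, `ψ_j = 1` on `{2^(j-1) ≤ |x| ≤ 2^j}`, and
`|∂^α ψ_j| ≤ C_α 2^(-|α| j)` with `C_α` independent of `j`. -/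
structure DyadicPartition where
  ψ : ℕ → E3 → ℝ
  smooth : ∀ j, ContDiff ℝ (⊤ : ℕ∞) (ψ j)
  nonneg : ∀ j x, 0 ≤ ψ j x
  compSupp : ∀ j, HasCompactSupport (ψ j)
  supp_zero : ∀ x : E3, ψ 0 x ≠ 0 → ‖x‖ ≤ 2
  one_zero : ∀ x : E3, ‖x‖ ≤ 1 → ψ 0 x = 1
  supp_succ : ∀ j : ℕ, 1 ≤ j → ∀ x : E3, ψ j x ≠ 0 →
    (2:ℝ) ^ ((j:ℤ) - 2) ≤ ‖x‖ ∧ ‖x‖ ≤ (2:ℝ) ^ ((j:ℤ) + 1)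
  one_succ : ∀ j : ℕ, 1 ≤ j → ∀ x : E3,
    (2:ℝ) ^ ((j:ℤ) - 1) ≤ ‖x‖ → ‖x‖ ≤ (2:ℝ) ^ (j:ℤ) → ψ j x = 1
  deriv_bound : ∀ n : ℕ, ∃ C : ℝ, ∀ (j : ℕ) (x : E3),
    ‖iteratedFDeriv ℝ n (ψ j) x‖ ≤ C * (2:ℝ) ^ (-(n:ℤ) * (j:ℤ))

/-- The squared `H^s` norm `∫ (1+|ξ|²)^s |𝓕f(ξ)|² dξ` of a complex-valued function. -/
def HsNormSq (s : ℝ) (f : E3 → ℂ) : ℝ≥0∞ :=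
  ∫⁻ ξ : E3, ENNReal.ofReal ((1 + ‖ξ‖ ^ 2) ^ s) * (‖𝓕 f ξ‖₊ : ℝ≥0∞) ^ 2

/-- The squared weighted Sobolev norm
`‖u‖²_{H_{s,δ}} = Σ_j 2^{(3/2+δ)2j} ‖(ψ_j u)_{2^j}‖²_{H^s}`,
where `(ψ_j u)_{2^j}(x) = ψ_j(2^j x) u(2^j x)`. -/
def HwNormSq (P : DyadicPartition) (s δ : ℝ) (u : E3 → ℝ) : ℝ≥0∞ :=
  ∑' j : ℕ, ENNReal.ofReal ((2:ℝ) ^ ((3 + 2 * δ) * (j:ℝ))) *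
    HsNormSq s (fun x : E3 =>
      ((P.ψ j (((2:ℝ) ^ (j:ℕ)) • x) * u (((2:ℝ) ^ (j:ℕ)) • x) : ℝ) : ℂ))

/-- Membership in the weighted Sobolev space `H_{s,δ}` (for functions). -/
def MemH (P : DyadicPartition) (s δ : ℝ) (u : E3 → ℝ) : Prop :=
  LocallyIntegrable u volume ∧ HwNormSq P s δ u < ⊤

/-- The weighted Sobolev norm `‖u‖_{H_{s,δ}}`. -/
def Hnorm (P : DyadicPartition) (s δ : ℝ) (u : E3 → ℝ) : ℝ :=
  Real.sqrt (HwNormSq P s δ u).toReal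

/-- The squared weighted `L²_δ` norm `∫ (1+|x|)^{2δ} |u(x)|² dx`. -/
def L2wNormSq (δ : ℝ) (u : E3 → ℝ) : ℝ≥0∞ :=
  ∫⁻ x : E3, ENNReal.ofReal ((1 + ‖x‖) ^ (2 * δ)) * (‖u x‖₊ : ℝ≥0∞) ^ 2

/-- The weighted `L²_δ` norm. -/
def L2wNorm (δ : ℝ) (u : E3 → ℝ) : ℝ :=
  Real.sqrt (L2wNormSq δ u).toReal

/-- Membership in `L²_δ`. -/
def MemL2w (δ : ℝ) (u : E3 → ℝ) : Prop :=
  AEStronglyMeasurable u volume ∧ L2wNormSq δ u < ⊤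

/-- The partial derivative `∂_a f (x)`. -/
def pd (f : E3 → ℝ) (a : Fin 3) (x : E3) : ℝ :=
  fderiv ℝ f x (EuclideanSpace.single a 1)


/-! Each rescaled dyadic piece `(ψ_j w)_{2^j}` is bounded pointwise by the `L¹` norm of its Fourier
transform, hence, by Cauchy–Schwarz, by `(∫ (1+|ξ|²)^{-s})^{1/2}` (finite for `s > 3/2`) times its
`H^s` norm. Read on the dyadic annulus where `ψ_j = 1`, this gives the decay
`|w(x)| ≲ ‖w‖_{H_{s,δ}} (1+|x|)^{-(3/2+δ)}` and, summed over the annuli, `H_{s,δ} ⊂ L²_δ`.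
By the mean value theorem `|w₁^β - w₂^β| ≤ β (w₁^{β-1} + w₂^{β-1}) |w₁ - w₂|`, and the hypotheses
on `δ` say that `(3/2+δ)(β-1) ≥ 2`, so the decay of `w_i^{β-1}` pays for the extra weight
`(1+|x|)²`. -/

theorem rpow_le_two_rpow_abs_mul_rpow {t c : ℝ} (ht : 0 < t) (htc : t ≤ 2 * c) (hct : c ≤ 2 * t)
    (a : ℝ) : t ^ a ≤ 2 ^ |a| * c ^ a := by
  have hc : 0 < c := by linarith
  rcases le_total 0 a with ha | ha
  · calc t ^ a ≤ (2 * c) ^ a := Real.rpow_le_rpow ht.le htc ha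
      _ = 2 ^ |a| * c ^ a := by rw [abs_of_nonneg ha, Real.mul_rpow zero_le_two hc.le]
  · calc t ^ a ≤ (c / 2) ^ a := Real.rpow_le_rpow_of_nonpos (by positivity) (by linarith) ha
      _ = 2 ^ |a| * c ^ a := by
        rw [abs_of_nonpos ha, Real.div_rpow hc.le zero_le_two, Real.rpow_neg zero_le_two]
        ring

theorem rpow_two_mul_mul_sq {t : ℝ} (ht : 0 ≤ t) (a y : ℝ) :
    t ^ (2 * a) * y ^ 2 = (t ^ a * |y|) ^ 2 := by
  rw [mul_pow, sq_abs, ← Real.rpow_mul_natCast ht, mul_comm a]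
  norm_num

theorem ofReal_mul_enorm_sq {w : ℝ} (hw : 0 ≤ w) (y : ℝ) :
    ENNReal.ofReal w * ‖y‖ₑ ^ 2 = ENNReal.ofReal (w * y ^ 2) := by
  rw [Real.enorm_eq_ofReal_abs, ← ENNReal.ofReal_pow (abs_nonneg y), sq_abs,
    ← ENNReal.ofReal_mul hw]

theorem sq_lintegral_mul_le {α : Type*} [MeasurableSpace α] {μ : Measure α} {f g : α → ℝ≥0∞}
    (hf : AEMeasurable f μ) (hg : AEMeasurable g μ) :
    (∫⁻ x, f x * g x ∂μ) ^ 2 ≤ (∫⁻ x, f x ^ 2 ∂μ) * ∫⁻ x, g x ^ 2 ∂μ := by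
  have h := ENNReal.lintegral_mul_le_Lp_mul_Lq μ Real.HolderConjugate.two_two hf hg
  simp only [ENNReal.rpow_two] at h
  calc (∫⁻ x, f x * g x ∂μ) ^ 2
      ≤ ((∫⁻ x, f x ^ 2 ∂μ) ^ (1 / 2 : ℝ) * (∫⁻ x, g x ^ 2 ∂μ) ^ (1 / 2 : ℝ)) ^ 2 := by
        gcongr; simpa using h
    _ = (∫⁻ x, f x ^ 2 ∂μ) * ∫⁻ x, g x ^ 2 ∂μ := by
        rw [mul_pow, ← ENNReal.rpow_natCast, ← ENNReal.rpow_natCast (_ ^ _), ← ENNReal.rpow_mul,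
          ← ENNReal.rpow_mul]
        norm_num

theorem rpow_sub_rpow_le_mul {β a b : ℝ} (hβ : 1 ≤ β) (hb : 0 ≤ b) (hba : b ≤ a) :
    a ^ β - b ^ β ≤ β * a ^ (β - 1) * (a - b) := by
  have hderiv (x : ℝ) : HasDerivAt (fun t => t ^ β) (β * x ^ (β - 1)) x :=
    Real.hasDerivAt_rpow_const (Or.inr hβ)
  refine (convex_Icc 0 a).image_sub_le_mul_sub_of_deriv_le
    (fun x _ => (hderiv x).continuousAt.continuousWithinAt)
    (fun x _ => (hderiv x).differentiableAt.differentiableWithinAt) (fun x hx => ?_)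
    b ⟨hb, hba⟩ a ⟨hb.trans hba, le_rfl⟩ hba
  rw [interior_Icc] at hx
  rw [(hderiv x).deriv]
  gcongr
  exacts [hx.1.le, hx.2.le]

theorem abs_rpow_sub_rpow_le {β a b : ℝ} (hβ : 1 ≤ β) (ha : 0 ≤ a) (hb : 0 ≤ b) :
    |a ^ β - b ^ β| ≤ β * (a ^ (β - 1) + b ^ (β - 1)) * |a - b| := by
  wlog hba : b ≤ a generalizing a b
  · simpa only [abs_sub_comm, add_comm] using this hb ha (le_of_not_ge hba)
  rw [abs_of_nonneg (sub_nonneg.2 (Real.rpow_le_rpow hb hba (by linarith))),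
    abs_of_nonneg (sub_nonneg.2 hba)]
  calc a ^ β - b ^ β ≤ β * a ^ (β - 1) * (a - b) := rpow_sub_rpow_le_mul hβ hb hba
    _ ≤ β * (a ^ (β - 1) + b ^ (β - 1)) * (a - b) := by
      gcongr
      exact le_add_of_nonneg_right (Real.rpow_nonneg hb _)

theorem rpow_sub_one_le_of_le_mul_rpow_neg {β κ A M u : ℝ} (hβ : 1 ≤ β)
    (hκβ : 2 ≤ κ * (β - 1)) (hA : 1 ≤ A) (hu : 0 ≤ u) (h : u ≤ M * A ^ (-κ)) :
    u ^ (β - 1) ≤ M ^ (β - 1) * A ^ (-2 : ℝ) := by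
  have hA0 : 0 < A := by linarith
  have hM : 0 ≤ M := nonneg_of_mul_nonneg_left (hu.trans h) (Real.rpow_pos_of_pos hA0 _)
  calc u ^ (β - 1) ≤ (M * A ^ (-κ)) ^ (β - 1) := Real.rpow_le_rpow hu h (by linarith)
    _ = M ^ (β - 1) * A ^ (-(κ * (β - 1))) := by
      rw [Real.mul_rpow hM (by positivity), ← Real.rpow_mul hA0.le, neg_mul]
    _ ≤ M ^ (β - 1) * A ^ (-2 : ℝ) := by gcongr

theorem weighted_abs_rpow_sub_rpow_le {β κ δ A M₁ M₂ u₁ u₂ : ℝ} (hβ : 1 ≤ β)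
    (hκβ : 2 ≤ κ * (β - 1)) (hA : 1 ≤ A) (hu₁ : 0 ≤ u₁) (hu₂ : 0 ≤ u₂)
    (h₁ : u₁ ≤ M₁ * A ^ (-κ)) (h₂ : u₂ ≤ M₂ * A ^ (-κ)) :
    A ^ (δ + 2) * |u₁ ^ β - u₂ ^ β| ≤
      β * (M₁ ^ (β - 1) + M₂ ^ (β - 1)) * (A ^ δ * |u₁ - u₂|) := by
  have hA0 : 0 < A := by linarith
  calc A ^ (δ + 2) * |u₁ ^ β - u₂ ^ β|
      ≤ A ^ (δ + 2) * (β * (u₁ ^ (β - 1) + u₂ ^ (β - 1)) * |u₁ - u₂|) := by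
        gcongr; exact abs_rpow_sub_rpow_le hβ hu₁ hu₂
    _ ≤ A ^ (δ + 2) * (β * (M₁ ^ (β - 1) * A ^ (-2 : ℝ) + M₂ ^ (β - 1) * A ^ (-2 : ℝ)) *
          |u₁ - u₂|) := by
        gcongr
        exacts [rpow_sub_one_le_of_le_mul_rpow_neg hβ hκβ hA hu₁ h₁,
          rpow_sub_one_le_of_le_mul_rpow_neg hβ hκβ hA hu₂ h₂]
    _ = β * (M₁ ^ (β - 1) + M₂ ^ (β - 1)) * ((A ^ (δ + 2) * A ^ (-2 : ℝ)) * |u₁ - u₂|) := by ring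
    _ = β * (M₁ ^ (β - 1) + M₂ ^ (β - 1)) * (A ^ δ * |u₁ - u₂|) := by
        rw [← Real.rpow_add hA0, add_neg_cancel_right]

theorem sq_mul_rpow_add_rpow_le {β p K N₁ N₂ : ℝ} (hK : 0 ≤ K) (hN₁ : 0 ≤ N₁) (hN₂ : 0 ≤ N₂) :
    (β * ((K * N₁) ^ p + (K * N₂) ^ p)) ^ 2 ≤
      4 * K ^ (2 * p) * (β ^ 2 / 2) * (N₁ ^ (2 * p) + N₂ ^ (2 * p)) := by
  have hsq {N : ℝ} (hN : 0 ≤ N) : ((K * N) ^ p) ^ 2 = K ^ (2 * p) * N ^ (2 * p) := by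
    rw [← Real.rpow_mul_natCast (by positivity), Real.mul_rpow hK hN, Nat.cast_ofNat, mul_comm p]
  calc _ = β ^ 2 * ((K * N₁) ^ p + (K * N₂) ^ p) ^ 2 := by ring
    _ ≤ β ^ 2 * (2 * (((K * N₁) ^ p) ^ 2 + ((K * N₂) ^ p) ^ 2)) := by gcongr; exact add_sq_le
    _ = _ := by rw [hsq hN₁, hsq hN₂]; ring

theorem two_le_mul_sub_one_of_div_le {m β δ : ℝ} (hm : 1 < m) (hmβ : m ≤ β)
    (hδ : 2 / (m - 1) - 3 / 2 ≤ δ) : 2 ≤ (3 / 2 + δ) * (β - 1) := by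
  have hm1 : 0 < m - 1 := by linarith
  calc (2 : ℝ) = 2 / (m - 1) * (m - 1) := (div_mul_cancel₀ _ hm1.ne').symm
    _ ≤ (3 / 2 + δ) * (β - 1) :=
      mul_le_mul (by linarith) (by linarith) hm1.le (by linarith [div_pos two_pos hm1])

section Fourier

open scoped Convolution
open ContinuousLinearMap

variable {V F : Type*} [NormedAddCommGroup V] [InnerProductSpace ℝ V] [MeasurableSpace V]
  [BorelSpace V] [FiniteDimensional ℝ V]
  [NormedAddCommGroup F] [NormedSpace ℂ F] [CompleteSpace F]

theorem norm_convolution_le_integral_norm_fourier {ψ : V → ℝ} {f : V → F}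
    (hψ : Continuous ψ) (hψs : HasCompactSupport ψ) (hf : Integrable f)
    (h𝓕f : Integrable (𝓕 f)) (x : V) :
    ‖(ψ ⋆[lsmul ℝ ℝ] f) x‖ ≤ (∫ y, |ψ y|) * ∫ ξ, ‖𝓕 f ξ‖ := by
  have hψi : Integrable ψ := hψ.integrable_of_hasCompactSupport hψs
  set h := ψ ⋆[lsmul ℝ ℝ] f
  have h𝓕h (ξ : V) : ‖𝓕 h ξ‖ ≤ (∫ y, |ψ y|) * ‖𝓕 f ξ‖ := by
    have hconv : 𝓕 h ξ = 𝓕 (fun y => (ψ y : ℂ)) ξ • 𝓕 f ξ := by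
      -- `convert` bridges two instance paths to `NormedSpace ℂ ℂ`
      convert Real.fourier_smul_convolution_eq hψi.ofReal hf ξ using 2
      · ext y
        simp only [h, convolution_def, lsmul_apply]
        congr 1 with t
      · rfl
    rw [hconv, norm_smul]
    gcongr
    have h𝓕ψ : ‖𝓕 (fun y => (ψ y : ℂ)) ξ‖ ≤ ∫ y, ‖(ψ y : ℂ)‖ :=
      VectorFourier.norm_fourierIntegral_le_integral_norm 𝐞 volume (innerₗ V) _ ξ
    simpa using h𝓕ψ
  have hhi : Integrable h := hψi.integrable_convolution _ hf
  have h𝓕hi : Integrable (𝓕 h) := (h𝓕f.norm.const_mul _).mono'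
    (VectorFourier.fourierIntegral_continuous Real.continuous_fourierChar continuous_inner
      hhi).aestronglyMeasurable (.of_forall h𝓕h)
  have hhc : Continuous h := hψs.continuous_convolution_left _ hψ hf.locallyIntegrable
  calc ‖h x‖ = ‖𝓕⁻ (𝓕 h) x‖ := by rw [hhi.fourierInv_fourier_eq h𝓕hi hhc.continuousAt]
    _ ≤ ∫ ξ, ‖𝓕 h ξ‖ :=
        VectorFourier.norm_fourierIntegral_le_integral_norm 𝐞 volume (-innerₗ V) _ x
    _ ≤ ∫ ξ, (∫ y, |ψ y|) * ‖𝓕 f ξ‖ := integral_mono h𝓕hi.norm (h𝓕f.norm.const_mul _) h𝓕h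
    _ = (∫ y, |ψ y|) * ∫ ξ, ‖𝓕 f ξ‖ := integral_const_mul _ _

theorem ae_enorm_le_lintegral_enorm_fourier {f : V → F} (hf : Integrable f) :
    ∀ᵐ x, ‖f x‖ₑ ≤ ∫⁻ ξ, ‖𝓕 f ξ‖ₑ := by
  by_cases htop : ∫⁻ ξ, ‖𝓕 f ξ‖ₑ = ⊤
  · simp [htop]
  have h𝓕f : Integrable (𝓕 f) :=
    ⟨(VectorFourier.fourierIntegral_continuous Real.continuous_fourierChar continuous_inner
      hf).aestronglyMeasurable, lt_top_iff_ne_top.2 htop⟩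
  -- Fourier inversion holds everywhere for the continuous mollifications `φ n ⋆ f`,
  -- and these tend to `f` almost everywhere.
  let φ : ℕ → ContDiffBump (0 : V) := fun n =>
    ⟨(n + 1 : ℝ)⁻¹, 2 * (n + 1 : ℝ)⁻¹, by positivity, by
      have : (0 : ℝ) < (n + 1 : ℝ)⁻¹ := by positivity
      linarith⟩
  have hφ : Filter.Tendsto (fun n => (φ n).rOut) Filter.atTop (nhds 0) := by
    simpa using (tendsto_one_div_add_atTop_nhds_zero_nat.const_mul (2 : ℝ))
  filter_upwards [ContDiffBump.ae_convolution_tendsto_right_of_locallyIntegrable hφ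
    (.of_forall fun n => le_rfl) hf.locallyIntegrable] with x hx
  refine le_of_tendsto hx.enorm (.of_forall fun n => ?_)
  have hbound := norm_convolution_le_integral_norm_fourier ((φ n).continuous_normed (μ := volume))
    (φ n).hasCompactSupport_normed hf h𝓕f x
  have hmass : ∫ y, |(φ n).normed volume y| = 1 := by
    simp_rw [abs_of_nonneg ((φ n).nonneg_normed _)]
    exact (φ n).integral_normed (μ := volume)
  rw [hmass, one_mul] at hbound
  calc ‖((φ n).normed volume ⋆[lsmul ℝ ℝ] f) x‖ₑ
      ≤ ENNReal.ofReal (∫ ξ, ‖𝓕 f ξ‖) := by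
        rw [← ofReal_norm]; exact ENNReal.ofReal_le_ofReal hbound
    _ = ∫⁻ ξ, ‖𝓕 f ξ‖ₑ := ofReal_integral_norm_eq_lintegral_enorm h𝓕f

end Fourier

def bracketIntegral (s : ℝ) : ℝ≥0∞ := ∫⁻ ξ : E3, ENNReal.ofReal ((1 + ‖ξ‖ ^ 2) ^ (-s))

theorem bracketIntegral_lt_top {s : ℝ} (hs : 3 / 2 < s) : bracketIntegral s < ⊤ := by
  have h := integrable_rpow_neg_one_add_norm_sq (E := E3) (μ := volume) (r := 2 * s)
    (by rw [finrank_euclideanSpace_fin]; push_cast; linarith)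
  rw [show -(2 * s) / 2 = -s by ring] at h
  exact h.lintegral_lt_top

theorem sq_lintegral_enorm_fourier_le (s : ℝ) {f : E3 → ℂ} (hf : Integrable f) :
    (∫⁻ ξ, ‖𝓕 f ξ‖ₑ) ^ 2 ≤ bracketIntegral s * HsNormSq s f := by
  have hpos (ξ : E3) : 0 < 1 + ‖ξ‖ ^ 2 := by positivity
  have h𝓕 : Continuous (𝓕 f) :=
    VectorFourier.fourierIntegral_continuous Real.continuous_fourierChar continuous_inner hf
  have hsplit (ξ : E3) : ‖𝓕 f ξ‖ₑ = ENNReal.ofReal ((1 + ‖ξ‖ ^ 2) ^ (-s / 2)) *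
      (ENNReal.ofReal ((1 + ‖ξ‖ ^ 2) ^ (s / 2)) * ‖𝓕 f ξ‖ₑ) := by
    rw [← mul_assoc, ← ENNReal.ofReal_mul (by positivity), ← Real.rpow_add (hpos ξ), neg_div,
      neg_add_cancel, Real.rpow_zero, ENNReal.ofReal_one, one_mul]
  have hsq (ξ : E3) (a : ℝ) : ENNReal.ofReal ((1 + ‖ξ‖ ^ 2) ^ (a / 2)) ^ 2
      = ENNReal.ofReal ((1 + ‖ξ‖ ^ 2) ^ a) := by
    rw [← ENNReal.ofReal_pow (by positivity), ← Real.rpow_mul_natCast (hpos ξ).le]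
    congr 2
    push_cast
    ring
  rw [lintegral_congr hsplit]
  refine (sq_lintegral_mul_le (by fun_prop) (by fun_prop)).trans_eq ?_
  simp_rw [mul_pow, hsq]
  rfl

theorem ae_enorm_sq_le_HsNormSq (s : ℝ) {f : E3 → ℂ} (hf : Integrable f) :
    ∀ᵐ x, ‖f x‖ₑ ^ 2 ≤ bracketIntegral s * HsNormSq s f := by
  filter_upwards [ae_enorm_le_lintegral_enorm_fourier hf] with x hx
  exact (pow_le_pow_left₀ (by positivity) hx 2).trans (sq_lintegral_enorm_fourier_le s hf)

def dyadicAnnulus : ℕ → Set E3 := disjointed fun j => Metric.closedBall 0 (2 ^ j)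

theorem dyadicAnnulus_zero : dyadicAnnulus 0 = Metric.closedBall 0 1 := by
  simp [dyadicAnnulus, disjointed_zero]

theorem mem_dyadicAnnulus_succ {k : ℕ} {x : E3} :
    x ∈ dyadicAnnulus (k + 1) ↔ 2 ^ k < ‖x‖ ∧ ‖x‖ ≤ 2 ^ (k + 1) := by
  have hmono : Monotone fun j : ℕ => Metric.closedBall (0 : E3) (2 ^ j) := fun i j hij =>
    Metric.closedBall_subset_closedBall (pow_le_pow_right₀ one_le_two hij)
  simp [dyadicAnnulus, hmono.disjointed_add_one, and_comm]

theorem iUnion_dyadicAnnulus : ⋃ j, dyadicAnnulus j = univ := by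
  refine iUnion_disjointed.trans (eq_univ_of_forall fun x => mem_iUnion.2 ?_)
  obtain ⟨j, hj⟩ := pow_unbounded_of_one_lt ‖x‖ one_lt_two
  exact ⟨j, by simpa using hj.le⟩

theorem measurableSet_dyadicAnnulus (j : ℕ) : MeasurableSet (dyadicAnnulus j) :=
  MeasurableSet.disjointed (fun _ => Metric.isClosed_closedBall.measurableSet) j

theorem dyadicAnnulus_subset_closedBall (j : ℕ) :
    dyadicAnnulus j ⊆ Metric.closedBall 0 (2 ^ j) :=
  disjointed_subset _ j

theorem volume_dyadicAnnulus_le (j : ℕ) :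
    volume (dyadicAnnulus j) ≤
      ENNReal.ofReal ((2 ^ j) ^ 3) * volume (Metric.closedBall (0 : E3) 1) := by
  refine (measure_mono (dyadicAnnulus_subset_closedBall j)).trans_eq ?_
  rw [Measure.addHaar_closedBall' _ _ (by positivity), finrank_euclideanSpace_fin]

theorem DyadicPartition.psi_eq_one_of_mem_dyadicAnnulus (P : DyadicPartition) {j : ℕ} {x : E3}
    (hx : x ∈ dyadicAnnulus j) : P.ψ j x = 1 := by
  cases j with
  | zero => exact P.one_zero x (by simpa [dyadicAnnulus_zero] using hx)
  | succ k =>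
    obtain ⟨hlow, hup⟩ := mem_dyadicAnnulus_succ.1 hx
    refine P.one_succ (k + 1) (by omega) x ?_ (by exact_mod_cast hup)
    simpa using hlow.le

theorem one_add_norm_comparable_of_mem_dyadicAnnulus {j : ℕ} {x : E3}
    (hx : x ∈ dyadicAnnulus j) : 1 + ‖x‖ ≤ 2 * 2 ^ j ∧ 2 ^ j ≤ 2 * (1 + ‖x‖) := by
  have hball : ‖x‖ ≤ 2 ^ j := by simpa using dyadicAnnulus_subset_closedBall j hx
  have hone : (1 : ℝ) ≤ 2 ^ j := one_le_pow₀ one_le_two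
  refine ⟨by linarith, ?_⟩
  cases j with
  | zero => linarith [norm_nonneg x]
  | succ k =>
    have := (mem_dyadicAnnulus_succ.1 hx).1
    rw [pow_succ]
    linarith

theorem one_add_norm_rpow_le_of_mem_dyadicAnnulus {j : ℕ} {x : E3} (hx : x ∈ dyadicAnnulus j)
    (a : ℝ) : (1 + ‖x‖) ^ a ≤ 2 ^ |a| * 2 ^ (a * j) := by
  obtain ⟨h₁, h₂⟩ := one_add_norm_comparable_of_mem_dyadicAnnulus hx
  have := rpow_le_two_rpow_abs_mul_rpow (by positivity) h₁ h₂ a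
  rwa [← Real.rpow_natCast, ← Real.rpow_mul zero_le_two, mul_comm (j : ℝ)] at this

def dyadicPiece (P : DyadicPartition) (u : E3 → ℝ) (j : ℕ) : E3 → ℂ := fun x =>
  ((P.ψ j (((2:ℝ) ^ (j:ℕ)) • x) * u (((2:ℝ) ^ (j:ℕ)) • x) : ℝ) : ℂ)

theorem HwNormSq_eq_tsum (P : DyadicPartition) (s δ : ℝ) (u : E3 → ℝ) :
    HwNormSq P s δ u =
      ∑' j : ℕ, ENNReal.ofReal (2 ^ ((3 + 2 * δ) * j)) * HsNormSq s (dyadicPiece P u j) :=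
  rfl

theorem ofReal_mul_HsNormSq_dyadicPiece_le_HwNormSq (P : DyadicPartition) (s δ : ℝ)
    (u : E3 → ℝ) (j : ℕ) :
    ENNReal.ofReal (2 ^ ((3 + 2 * δ) * j)) * HsNormSq s (dyadicPiece P u j) ≤ HwNormSq P s δ u :=
  (HwNormSq_eq_tsum P s δ u).symm ▸ ENNReal.le_tsum j

theorem integrable_dyadicPiece (P : DyadicPartition) {u : E3 → ℝ}
    (hu : LocallyIntegrable u) (j : ℕ) : Integrable (dyadicPiece P u j) := by
  have h : Integrable fun x => P.ψ j x * u x := by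
    simpa using hu.integrable_smul_left_of_hasCompactSupport (P.smooth j).continuous
      (P.compSupp j)
  exact (integrable_comp_smul_iff volume (fun x => ((P.ψ j x * u x : ℝ) : ℂ))
    (pow_ne_zero j two_ne_zero)).2 h.ofReal

theorem ae_enorm_sq_psi_mul_le (P : DyadicPartition) (s : ℝ) {u : E3 → ℝ}
    (hu : LocallyIntegrable u) :
    ∀ᵐ x, ∀ j, ‖P.ψ j x * u x‖ₑ ^ 2 ≤ bracketIntegral s * HsNormSq s (dyadicPiece P u j) := by
  refine ae_all_iff.2 fun j => ?_
  have hc : (2:ℝ) ^ j ≠ 0 := pow_ne_zero j two_ne_zero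
  filter_upwards [(Measure.quasiMeasurePreserving_smul volume (inv_ne_zero hc)).ae
    (ae_enorm_sq_le_HsNormSq s (integrable_dyadicPiece P hu j))] with x hx
  simpa [dyadicPiece, smul_inv_smul₀ hc, ← ofReal_norm] using hx

theorem ae_enorm_sq_le_of_mem_dyadicAnnulus (P : DyadicPartition) (s : ℝ) {u : E3 → ℝ}
    (hu : LocallyIntegrable u) :
    ∀ᵐ x, ∀ j, x ∈ dyadicAnnulus j →
      ‖u x‖ₑ ^ 2 ≤ bracketIntegral s * HsNormSq s (dyadicPiece P u j) := by
  filter_upwards [ae_enorm_sq_psi_mul_le P s hu] with x hx j hj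
  simpa [P.psi_eq_one_of_mem_dyadicAnnulus hj] using hx j

theorem ae_ofReal_mul_enorm_sq_le_HwNormSq (P : DyadicPartition) (s δ : ℝ) {u : E3 → ℝ}
    (hu : LocallyIntegrable u) :
    ∀ᵐ x, ENNReal.ofReal ((1 + ‖x‖) ^ (3 + 2 * δ)) * ‖u x‖ₑ ^ 2 ≤
      ENNReal.ofReal (2 ^ |3 + 2 * δ|) * bracketIntegral s * HwNormSq P s δ u := by
  filter_upwards [ae_enorm_sq_le_of_mem_dyadicAnnulus P s hu] with x hx
  obtain ⟨j, hj⟩ := mem_iUnion.1 (iUnion_dyadicAnnulus ▸ mem_univ x)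
  calc _ ≤ ENNReal.ofReal (2 ^ |3 + 2 * δ| * 2 ^ ((3 + 2 * δ) * j)) *
        (bracketIntegral s * HsNormSq s (dyadicPiece P u j)) :=
        mul_le_mul' (ENNReal.ofReal_le_ofReal (one_add_norm_rpow_le_of_mem_dyadicAnnulus hj _))
          (hx j hj)
    _ = ENNReal.ofReal (2 ^ |3 + 2 * δ|) * bracketIntegral s *
        (ENNReal.ofReal (2 ^ ((3 + 2 * δ) * j)) * HsNormSq s (dyadicPiece P u j)) := by
        rw [ENNReal.ofReal_mul (by positivity)]
        ring
    _ ≤ _ := by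
        gcongr
        exact ofReal_mul_HsNormSq_dyadicPiece_le_HwNormSq P s δ u j

theorem exists_ae_abs_le_mul_one_add_norm_rpow (P : DyadicPartition) {s : ℝ} (hs : 3 / 2 < s)
    (δ : ℝ) : ∃ K, 0 ≤ K ∧ ∀ u, MemH P s δ u →
      ∀ᵐ x, |u x| ≤ K * Hnorm P s δ u * (1 + ‖x‖) ^ (-(3 / 2 + δ)) := by
  set K₀ := 2 ^ |3 + 2 * δ| * (bracketIntegral s).toReal
  refine ⟨√K₀, Real.sqrt_nonneg _, fun u hu => ?_⟩
  filter_upwards [ae_ofReal_mul_enorm_sq_le_HwNormSq P s δ hu.1] with x hx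
  have hA : 0 < 1 + ‖x‖ := by positivity
  have hreal : (1 + ‖x‖) ^ (3 + 2 * δ) * u x ^ 2 ≤ K₀ * (HwNormSq P s δ u).toReal := by
    rw [← ENNReal.ofReal_le_ofReal_iff (by positivity), ← ofReal_mul_enorm_sq (by positivity),
      ENNReal.ofReal_mul (by positivity), ENNReal.ofReal_mul (by positivity),
      ENNReal.ofReal_toReal (bracketIntegral_lt_top hs).ne, ENNReal.ofReal_toReal hu.2.ne]
    exact hx
  have hweighted : (1 + ‖x‖) ^ (3 / 2 + δ) * |u x| ≤ √K₀ * Hnorm P s δ u := by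
    rw [Hnorm, ← Real.sqrt_mul (by positivity),
      ← Real.sqrt_sq (by positivity : 0 ≤ (1 + ‖x‖) ^ (3 / 2 + δ) * |u x|),
      ← rpow_two_mul_mul_sq hA.le]
    exact Real.sqrt_le_sqrt (by convert hreal using 3; ring)
  calc |u x| = (1 + ‖x‖) ^ (3 / 2 + δ) * |u x| * (1 + ‖x‖) ^ (-(3 / 2 + δ)) := by
        rw [mul_comm, ← mul_assoc, ← Real.rpow_add hA, neg_add_cancel, Real.rpow_zero, one_mul]
    _ ≤ √K₀ * Hnorm P s δ u * (1 + ‖x‖) ^ (-(3 / 2 + δ)) := by gcongr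

theorem L2wNormSq_eq_lintegral (δ : ℝ) (u : E3 → ℝ) :
    L2wNormSq δ u = ∫⁻ x, ENNReal.ofReal ((1 + ‖x‖) ^ (2 * δ)) * ‖u x‖ₑ ^ 2 :=
  rfl

theorem setLIntegral_dyadicAnnulus_le (P : DyadicPartition) (s δ : ℝ) {u : E3 → ℝ}
    (hu : LocallyIntegrable u) (j : ℕ) :
    ∫⁻ x in dyadicAnnulus j, ENNReal.ofReal ((1 + ‖x‖) ^ (2 * δ)) * ‖u x‖ₑ ^ 2 ≤
      ENNReal.ofReal (2 ^ |2 * δ|) * bracketIntegral s * volume (Metric.closedBall (0 : E3) 1) *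
        (ENNReal.ofReal (2 ^ ((3 + 2 * δ) * j)) * HsNormSq s (dyadicPiece P u j)) := by
  set c := ENNReal.ofReal (2 ^ |2 * δ| * 2 ^ (2 * δ * j)) *
    (bracketIntegral s * HsNormSq s (dyadicPiece P u j)) with hc
  have hexp : (2 : ℝ) ^ (2 * δ * j) * (2 ^ j) ^ 3 = 2 ^ ((3 + 2 * δ) * j) := by
    rw [← pow_mul, ← Real.rpow_natCast, ← Real.rpow_add two_pos]
    push_cast
    ring_nf
  calc _ ≤ ∫⁻ _ in dyadicAnnulus j, c := by
        refine setLIntegral_mono_ae' (measurableSet_dyadicAnnulus j) ?_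
        filter_upwards [ae_enorm_sq_le_of_mem_dyadicAnnulus P s hu] with x hx hxj
        exact mul_le_mul' (ENNReal.ofReal_le_ofReal
          (one_add_norm_rpow_le_of_mem_dyadicAnnulus hxj _)) (hx j hxj)
    _ = c * volume (dyadicAnnulus j) := setLIntegral_const _ _
    _ ≤ c * (ENNReal.ofReal ((2 ^ j) ^ 3) * volume (Metric.closedBall (0 : E3) 1)) := by
        gcongr; exact volume_dyadicAnnulus_le j
    _ = _ := by
        rw [hc, ← hexp, ENNReal.ofReal_mul (by positivity), ENNReal.ofReal_mul (by positivity)]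
        ring

theorem L2wNormSq_le_HwNormSq (P : DyadicPartition) (s δ : ℝ) {u : E3 → ℝ}
    (hu : LocallyIntegrable u) :
    L2wNormSq δ u ≤ ENNReal.ofReal (2 ^ |2 * δ|) * bracketIntegral s *
      volume (Metric.closedBall (0 : E3) 1) * HwNormSq P s δ u := by
  calc L2wNormSq δ u = ∑' j, ∫⁻ x in dyadicAnnulus j,
        ENNReal.ofReal ((1 + ‖x‖) ^ (2 * δ)) * ‖u x‖ₑ ^ 2 := by
        rw [L2wNormSq_eq_lintegral, ← setLIntegral_univ, ← iUnion_dyadicAnnulus,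
          lintegral_iUnion measurableSet_dyadicAnnulus (disjoint_disjointed _)]
    _ ≤ _ := by
        rw [HwNormSq_eq_tsum, ← ENNReal.tsum_mul_left]
        exact ENNReal.tsum_le_tsum (setLIntegral_dyadicAnnulus_le P s δ hu)

theorem MemH.L2wNormSq_lt_top {P : DyadicPartition} {s δ : ℝ} {u : E3 → ℝ} (hs : 3 / 2 < s)
    (hu : MemH P s δ u) : L2wNormSq δ u < ⊤ :=
  (L2wNormSq_le_HwNormSq P s δ hu.1).trans_lt <| ENNReal.mul_lt_top
    (ENNReal.mul_lt_top (ENNReal.mul_lt_top ENNReal.ofReal_lt_top (bracketIntegral_lt_top hs))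
      measure_closedBall_lt_top) hu.2

theorem L2wNormSq_sub_le {δ : ℝ} {u v : E3 → ℝ} (hu : AEMeasurable u) :
    L2wNormSq δ (fun x => u x - v x) ≤ 2 * L2wNormSq δ u + 2 * L2wNormSq δ v := by
  have hw (x : E3) : 0 ≤ (1 + ‖x‖) ^ (2 * δ) := by positivity
  have hmeas : AEMeasurable fun x => 2 * (ENNReal.ofReal ((1 + ‖x‖) ^ (2 * δ)) * ‖u x‖ₑ ^ 2) := by
    fun_prop
  rw [L2wNormSq_eq_lintegral, L2wNormSq_eq_lintegral, L2wNormSq_eq_lintegral,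
    ← lintegral_const_mul' _ _ (by norm_num),
    ← lintegral_const_mul' _ _ (by norm_num), ← lintegral_add_left' hmeas]
  refine lintegral_mono fun x => ?_
  simp only [ofReal_mul_enorm_sq (hw x)]
  calc ENNReal.ofReal ((1 + ‖x‖) ^ (2 * δ) * (u x - v x) ^ 2)
      ≤ ENNReal.ofReal (2 * ((1 + ‖x‖) ^ (2 * δ) * u x ^ 2) +
          2 * ((1 + ‖x‖) ^ (2 * δ) * v x ^ 2)) := by
        refine ENNReal.ofReal_le_ofReal ?_
        have := mul_le_mul_of_nonneg_left (add_sq_le (a := u x) (b := -v x)) (hw x)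
        simp only [← sub_eq_add_neg, neg_sq] at this
        linarith
    _ = _ := by
        rw [ENNReal.ofReal_add (by positivity) (by positivity), ENNReal.ofReal_mul zero_le_two,
          ENNReal.ofReal_mul zero_le_two, ENNReal.ofReal_ofNat]

theorem MemH.L2wNormSq_sub_lt_top {P : DyadicPartition} {s δ : ℝ} {u v : E3 → ℝ}
    (hs : 3 / 2 < s) (hu : MemH P s δ u) (hv : MemH P s δ v) :
    L2wNormSq δ (fun x => u x - v x) < ⊤ :=
  (L2wNormSq_sub_le hu.1.aestronglyMeasurable.aemeasurable).trans_lt <| ENNReal.add_lt_top.2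
    ⟨ENNReal.mul_lt_top (by norm_num) (hu.L2wNormSq_lt_top hs),
      ENNReal.mul_lt_top (by norm_num) (hv.L2wNormSq_lt_top hs)⟩

theorem L2wNorm_le_of_ae_le {δ' δ c : ℝ} {u v : E3 → ℝ} (hc : 0 ≤ c) (hv : L2wNormSq δ v ≠ ⊤)
    (h : ∀ᵐ x, (1 + ‖x‖) ^ δ' * |u x| ≤ c * ((1 + ‖x‖) ^ δ * |v x|)) :
    L2wNorm δ' u ≤ c * L2wNorm δ v := by
  have hsq : L2wNormSq δ' u ≤ ENNReal.ofReal (c ^ 2) * L2wNormSq δ v := by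
    rw [L2wNormSq_eq_lintegral, L2wNormSq_eq_lintegral,
      ← lintegral_const_mul' _ _ ENNReal.ofReal_ne_top]
    refine lintegral_mono_ae (h.mono fun x hx => ?_)
    rw [ofReal_mul_enorm_sq (by positivity), ofReal_mul_enorm_sq (by positivity),
      ← ENNReal.ofReal_mul (by positivity), rpow_two_mul_mul_sq (by positivity),
      rpow_two_mul_mul_sq (by positivity),
      ← mul_pow]
    exact ENNReal.ofReal_le_ofReal (pow_le_pow_left₀ (by positivity) hx 2)
  have := ENNReal.toReal_mono (ENNReal.mul_ne_top ENNReal.ofReal_ne_top hv) hsq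
  rw [ENNReal.toReal_mul, ENNReal.toReal_ofReal (sq_nonneg c)] at this
  rw [L2wNorm, L2wNorm, ← Real.sqrt_sq hc, ← Real.sqrt_mul (sq_nonneg c)]
  exact Real.sqrt_le_sqrt this

theorem three_halves_lt_and_two_le_mul_sub_one {s δ β : ℝ} (hβ : 2 ≤ β)
    (hint : β = (⌊β⌋ : ℝ) → 3/2 < s ∧ 2 / (β - 1) - 3/2 ≤ δ)
    (hfrac : β ≠ (⌊β⌋ : ℝ) →
      (5/2 < s ∧ s < β - (⌊β⌋ : ℝ) + 5/2) ∧ 2 / ((⌊β⌋ : ℝ) - 1) - 3/2 ≤ δ) :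
    3 / 2 < s ∧ 2 ≤ (3 / 2 + δ) * (β - 1) := by
  by_cases h : β = ⌊β⌋
  · exact ⟨(hint h).1, two_le_mul_sub_one_of_div_le (by linarith) le_rfl (hint h).2⟩
  · have hfloor : (2 : ℝ) ≤ ⌊β⌋ := by exact_mod_cast Int.le_floor.2 (by exact_mod_cast hβ)
    exact ⟨by linarith [(hfrac h).1.1],
      two_le_mul_sub_one_of_div_le (by linarith) (Int.floor_le β) (hfrac h).2⟩

/-- Nonlinear estimate for the difference of two powers.
Let `β ≥ 2` with `s, δ` as in the nonlinear power estimate. Then there is a constant `C`,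
independent of the functions, such that for all nonnegative `w₁, w₂ ∈ H_{s,δ}`,
`‖w₁^β - w₂^β‖_{L²_{δ+2}} ≤ C_d ‖w₁ - w₂‖_{L²_δ}` where
`C_d² ≤ C (β²/2)(‖w₁‖_{H_{s,δ}}^{2(β-1)} + ‖w₂‖_{H_{s,δ}}^{2(β-1)})`. -/
theorem power_difference_estimate (P : DyadicPartition) (s δ β : ℝ) (hβ : 2 ≤ β)
    (hint : β = (⌊β⌋ : ℝ) → 3/2 < s ∧ 2 / (β - 1) - 3/2 ≤ δ)
    (hfrac : β ≠ (⌊β⌋ : ℝ) →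
      (5/2 < s ∧ s < β - (⌊β⌋ : ℝ) + 5/2) ∧ 2 / ((⌊β⌋ : ℝ) - 1) - 3/2 ≤ δ) :
    ∃ C : ℝ, 0 < C ∧ ∀ w₁ w₂ : E3 → ℝ,
      MemH P s δ w₁ → MemH P s δ w₂ → (∀ x, 0 ≤ w₁ x) → (∀ x, 0 ≤ w₂ x) →
      ∃ Cd : ℝ, 0 ≤ Cd ∧
        Cd ^ 2 ≤ C * (β ^ 2 / 2) *
          (Hnorm P s δ w₁ ^ (2 * (β - 1)) + Hnorm P s δ w₂ ^ (2 * (β - 1))) ∧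
        L2wNorm (δ + 2) (fun x => w₁ x ^ β - w₂ x ^ β) ≤
          Cd * L2wNorm δ (fun x => w₁ x - w₂ x) := by
  obtain ⟨hs, hκβ⟩ := three_halves_lt_and_two_le_mul_sub_one hβ hint hfrac
  obtain ⟨K, hK, hdecay⟩ := exists_ae_abs_le_mul_one_add_norm_rpow P hs δ
  refine ⟨4 * K ^ (2 * (β - 1)) + 1, by positivity, fun w₁ w₂ hw₁ hw₂ hp₁ hp₂ => ?_⟩
  have hN₁ : 0 ≤ Hnorm P s δ w₁ := Real.sqrt_nonneg _
  have hN₂ : 0 ≤ Hnorm P s δ w₂ := Real.sqrt_nonneg _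
  refine ⟨β * ((K * Hnorm P s δ w₁) ^ (β - 1) + (K * Hnorm P s δ w₂) ^ (β - 1)),
    mul_nonneg (by linarith) (by positivity),
    (sq_mul_rpow_add_rpow_le hK hN₁ hN₂).trans (by gcongr; linarith), ?_⟩
  refine L2wNorm_le_of_ae_le (mul_nonneg (by linarith) (by positivity))
    (hw₁.L2wNormSq_sub_lt_top hs hw₂).ne ?_
  filter_upwards [hdecay w₁ hw₁, hdecay w₂ hw₂] with x h₁ h₂
  rw [abs_of_nonneg (hp₁ x)] at h₁
  rw [abs_of_nonneg (hp₂ x)] at h₂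
  exact weighted_abs_rpow_sub_rpow_le (by linarith) hκβ (by linarith [norm_nonneg x])
    (hp₁ x) (hp₂ x) h₁ h₂
end
end

section
/- Let X and Y be real Hilbert spaces with X ⊆ Y such that the inclusion map X → Y is continuous. Let K ⊆ X be a nonempty, convex, closed and bounded subset of X, and let Φ : K → K be a map for which there exists a constant Λ ∈ (0,1) with ‖Φ(x₁) − Φ(x₂)‖_Y ≤ Λ ‖x₁ − x₂‖_Y for all x₁, x₂ ∈ K. Then Φ admits a unique fixed point x* ∈ K, i.e. a unique x* ∈ K with Φ(x*) = x*. -/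
/-!
Closed bounded convex subsets of a Hilbert space behave like compact sets: a decreasing sequence
of nonempty ones has nonempty intersection (the minimal-norm points form a Cauchy sequence by the
parallelogram law). Hence the image of `K` under the continuous linear inclusion is closed in `Y`,
so complete for the `Y`-metric, and `Φ` transported to it is a contraction there, to which
Banach's fixed-point theorem applies.
-/

open Set Filter Topology Metric Bornology Function

section Hilbert

variable {X : Type*} [NormedAddCommGroup X] [InnerProductSpace ℝ X]

theorem exists_mem_forall_norm_le_of_convex_of_isClosed [CompleteSpace X] {C : Set X}
    (hne : C.Nonempty) (hconv : Convex ℝ C) (hclosed : IsClosed C) :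
    ∃ p ∈ C, ∀ w ∈ C, ‖p‖ ≤ ‖w‖ := by
  obtain ⟨p, hp, hinf⟩ := exists_norm_eq_iInf_of_complete_convex hne hclosed.isComplete hconv 0
  refine ⟨p, hp, fun w hw => ?_⟩
  have : ⨅ v : C, ‖0 - (v : X)‖ ≤ ‖0 - w‖ :=
    ciInf_le ⟨0, forall_mem_range.2 fun _ => norm_nonneg _⟩ (⟨w, hw⟩ : C)
  rw [← hinf] at this
  simpa only [zero_sub, norm_neg] using this

theorem sq_norm_sub_le_of_le_norm_midpoint {a b : X} {r L : ℝ} (hr : 0 ≤ r)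
    (hmid : r ≤ ‖midpoint ℝ a b‖) (ha : ‖a‖ ≤ L) (hb : ‖b‖ ≤ L) :
    ‖a - b‖ ^ 2 ≤ 4 * (L ^ 2 - r ^ 2) := by
  have hsum : 2 * r ≤ ‖a + b‖ := by
    rw [midpoint_eq_smul_add, norm_smul] at hmid
    norm_num at hmid
    linarith
  nlinarith [parallelogram_law_with_norm ℝ a b, norm_nonneg a, norm_nonneg b]

theorem nonempty_iInter_of_antitone_of_convex_of_isClosed [CompleteSpace X] {C : ℕ → Set X}
    (hanti : Antitone C) (hne : ∀ n, (C n).Nonempty) (hconv : ∀ n, Convex ℝ (C n))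
    (hclosed : ∀ n, IsClosed (C n)) (hbdd : IsBounded (C 0)) : (⋂ n, C n).Nonempty := by
  choose p hp hmin using fun n =>
    exists_mem_forall_norm_le_of_convex_of_isClosed (hne n) (hconv n) (hclosed n)
  obtain ⟨R, hR⟩ := hbdd.subset_closedBall 0
  have hpR : ∀ n, ‖p n‖ ≤ R := fun n => by
    simpa using hR (hanti (Nat.zero_le n) (hp n))
  have hmono : Monotone fun n => ‖p n‖ := fun n m hnm => hmin n _ (hanti hnm (hp m))
  have hbddAbove : BddAbove (range fun n => ‖p n‖) := ⟨R, forall_mem_range.2 hpR⟩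
  set L := ⨆ n, ‖p n‖
  have hpL : ∀ n, ‖p n‖ ≤ L := le_ciSup hbddAbove
  have htendsto : Tendsto (fun n => ‖p n‖) atTop (𝓝 L) := tendsto_atTop_ciSup hmono hbddAbove
  have hdist : ∀ n m N, N ≤ n → N ≤ m → dist (p n) (p m) ≤ √(4 * (L ^ 2 - ‖p N‖ ^ 2)) := by
    intro n m N hn hm
    have hmid : midpoint ℝ (p n) (p m) ∈ C N :=
      (hconv N).midpoint_mem (hanti hn (hp n)) (hanti hm (hp m))
    rw [dist_eq_norm]
    exact Real.le_sqrt_of_sq_le <| sq_norm_sub_le_of_le_norm_midpoint (norm_nonneg _)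
      (hmin N _ hmid) (hpL n) (hpL m)
  have hbound : Tendsto (fun N => √(4 * (L ^ 2 - ‖p N‖ ^ 2))) atTop (𝓝 0) := by
    have := (((htendsto.pow 2).const_sub (L ^ 2)).const_mul 4).sqrt
    rwa [sub_self, mul_zero, Real.sqrt_zero] at this
  obtain ⟨x, hx⟩ := cauchySeq_tendsto_of_complete (cauchySeq_of_le_tendsto_0 _ hdist hbound)
  exact ⟨x, mem_iInter.2 fun n => (hclosed n).mem_of_tendsto hx
    (eventually_atTop.2 ⟨n, fun m hm => hanti hm (hp m)⟩)⟩

theorem ContinuousLinearMap.isClosed_image_of_convex_of_isBounded [CompleteSpace X]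
    {Y : Type*} [NormedAddCommGroup Y] [NormedSpace ℝ Y] (j : X →L[ℝ] Y) {K : Set X}
    (hconv : Convex ℝ K) (hclosed : IsClosed K) (hbdd : IsBounded K) : IsClosed (j '' K) := by
  refine isClosed_of_closure_subset fun y hy => ?_
  set C : ℕ → Set X := fun n => K ∩ j ⁻¹' closedBall y (1 / (n + 1))
  have hanti : Antitone C := fun n m hnm => inter_subset_inter_right _ <|
    preimage_mono (closedBall_subset_closedBall (Nat.one_div_le_one_div hnm))
  have hne : ∀ n, (C n).Nonempty := fun n => by
    obtain ⟨_, ⟨x, hx, rfl⟩, hxy⟩ := mem_closure_iff.1 hy _ Nat.one_div_pos_of_nat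
    exact ⟨x, hx, by simpa [dist_comm] using hxy.le⟩
  obtain ⟨x, hx⟩ := nonempty_iInter_of_antitone_of_convex_of_isClosed hanti hne
    (fun n => hconv.inter ((convex_closedBall y _).linear_preimage j.toLinearMap))
    (fun n => hclosed.inter (isClosed_closedBall.preimage j.continuous))
    (hbdd.subset inter_subset_left)
  rw [mem_iInter] at hx
  refine ⟨x, (hx 0).1, eq_of_forall_dist_le fun ε hε => ?_⟩
  obtain ⟨n, hn⟩ := exists_nat_one_div_lt hε
  exact (hx n).2.trans hn.le

end Hilbert

theorem exists_unique_isFixedPt_of_lipschitzOnWith {α : Type*} [MetricSpace α] {f : α → α}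
    {s : Set α} {K : NNReal} (hK : K < 1) (hsc : IsComplete s) (hne : s.Nonempty)
    (hsf : MapsTo f s s) (hf : LipschitzOnWith K f s) : ∃! x, x ∈ s ∧ IsFixedPt f x := by
  have hcontr : ContractingWith K (hsf.restrict f s s) :=
    ⟨hK, hsf.lipschitzOnWith_iff_restrict.1 hf⟩
  obtain ⟨x, hx⟩ := hne
  obtain ⟨y, hys, hfix, -⟩ := hcontr.exists_fixedPoint' hsc hsf hx (edist_ne_top x (f x))
  refine ⟨y, ⟨hys, hfix⟩, fun z ⟨hzs, hz⟩ => ?_⟩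
  exact congrArg Subtype.val <|
    hcontr.fixedPoint_unique' (x := ⟨z, hzs⟩) (y := ⟨y, hys⟩) (Subtype.ext hz) (Subtype.ext hfix)

theorem modified_banach_fixed_point_general
    {X Y : Type*}
    [NormedAddCommGroup X] [InnerProductSpace ℝ X] [CompleteSpace X]
    [NormedAddCommGroup Y] [InnerProductSpace ℝ Y] [CompleteSpace Y]
    (j : X →ₗ[ℝ] Y) (hj_cont : Continuous j) (hj_inj : Function.Injective j)
    (K : Set X) (hK_ne : K.Nonempty) (hK_conv : Convex ℝ K)
    (hK_closed : IsClosed K) (hK_bdd : Bornology.IsBounded K)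
    (Φ : X → X) (hΦ : Set.MapsTo Φ K K)
    (Λ : ℝ) (hΛ1 : Λ < 1)
    (hcontr : ∀ x₁ ∈ K, ∀ x₂ ∈ K, ‖j (Φ x₁) - j (Φ x₂)‖ ≤ Λ * ‖j x₁ - j x₂‖) :
    ∃! x : X, x ∈ K ∧ Φ x = x := by
  have hcomplete : IsComplete (j '' K) :=
    (ContinuousLinearMap.isClosed_image_of_convex_of_isBounded ⟨j, hj_cont⟩ hK_conv hK_closed
      hK_bdd).isComplete
  set Ψ : Y → Y := j ∘ Φ ∘ invFun j
  have hΨ : ∀ x, Ψ (j x) = j (Φ x) := fun x => by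
    simp only [Ψ, comp_apply, leftInverse_invFun hj_inj x]
  have hmaps : MapsTo Ψ (j '' K) (j '' K) := by
    rintro _ ⟨x, hx, rfl⟩
    exact hΨ x ▸ mem_image_of_mem j (hΦ hx)
  have hlip : LipschitzOnWith Λ.toNNReal Ψ (j '' K) := LipschitzOnWith.of_dist_le' <| by
    rintro _ ⟨x₁, h₁, rfl⟩ _ ⟨x₂, h₂, rfl⟩
    simpa only [hΨ, dist_eq_norm] using hcontr x₁ h₁ x₂ h₂
  obtain ⟨_, ⟨⟨x, hxK, rfl⟩, hfix⟩, huniq⟩ := exists_unique_isFixedPt_of_lipschitzOnWith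
    (Real.toNNReal_lt_one.2 hΛ1) hcomplete (hK_ne.image j) hmaps hlip
  refine ⟨x, ⟨hxK, hj_inj (hΨ x ▸ hfix)⟩, fun z ⟨hzK, hz⟩ => hj_inj ?_⟩
  exact huniq _ ⟨mem_image_of_mem j hzK, by rw [IsFixedPt, hΨ, hz]⟩

/-- Modified Banach fixed-point theorem.
Let `X ⊆ Y` be real Hilbert spaces with continuous inclusion `j`, `K ⊆ X` nonempty,
convex, closed and bounded, and `Φ : K → K` a contraction with respect to the
`Y`-norm with constant `Λ ∈ (0,1)`. Then `Φ` has a unique fixed point in `K`. -/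
theorem modified_banach_fixed_point
    {X Y : Type*}
    [NormedAddCommGroup X] [InnerProductSpace ℝ X] [CompleteSpace X]
    [NormedAddCommGroup Y] [InnerProductSpace ℝ Y] [CompleteSpace Y]
    (j : X →ₗ[ℝ] Y) (hj_cont : Continuous j) (hj_inj : Function.Injective j)
    (K : Set X) (hK_ne : K.Nonempty) (hK_conv : Convex ℝ K)
    (hK_closed : IsClosed K) (hK_bdd : Bornology.IsBounded K)
    (Φ : X → X) (hΦ : Set.MapsTo Φ K K)
    (Λ : ℝ) (hΛ0 : 0 < Λ) (hΛ1 : Λ < 1)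
    (hcontr : ∀ x₁ ∈ K, ∀ x₂ ∈ K, ‖j (Φ x₁) - j (Φ x₂)‖ ≤ Λ * ‖j x₁ - j x₂‖) :
    ∃! x : X, x ∈ K ∧ Φ x = x :=
  modified_banach_fixed_point_general j hj_cont hj_inj K hK_ne hK_conv hK_closed hK_bdd Φ hΦ Λ hΛ1
    hcontr
end
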